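/- For every finite connected simple graph G and every vertex s of G, the slimness of G is at most ⌊(3/2)·Δ_s(G)⌋, where Δ_s(G) is the cluster-diameter of the layering partition of G with respect to s. -/

import Mathlib

open SimpleGraph

/-- Two vertices `u, v` lie in the same cluster of the layering partition of `G`
with respect to start vertex `s`: they are in the same layer and are connected by a
walk all of whose vertices are at distance at least `d_G(s,u)` from `s`. -/
def SameCluster {V : Type} (G : SimpleGraph V) (s u v : V) : Prop :=
  G.dist s u = G.dist s v ∧
  ∃ p : G.Walk u v, ∀ w ∈ p.support, G.dist s u ≤ G.dist s w

open scoped Classical in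
/-- The cluster-diameter `Δ_s(G)` of the layering partition of `G` w.r.t. `s`:
the largest distance in `G` between two vertices lying in a common cluster. -/
noncomputable def clusterDiam {V : Type} [Fintype V] (G : SimpleGraph V) (s : V) : ℕ :=
  Finset.univ.sup fun p : V × V =>
    if SameCluster G s p.1 p.2 then G.dist p.1 p.2 else 0

/-- A walk is a geodesic (shortest path) if its length equals the distance
between its endpoints. -/
def IsGeodesic {V : Type} (G : SimpleGraph V) {x y : V} (p : G.Walk x y) : Prop :=
  p.length = G.dist x y

/-- `G` is `δ`-slim: in every geodesic triangle, every vertex on one side is within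
distance `δ` (in `G`) from the union of the other two sides. -/
def IsSlim {V : Type} (G : SimpleGraph V) (δ : ℕ) : Prop :=
  ∀ (x y z : V) (pxy : G.Walk x y) (pxz : G.Walk x z) (pyz : G.Walk y z),
    IsGeodesic G pxy → IsGeodesic G pxz → IsGeodesic G pyz →
    ∀ u ∈ pxy.support, ∃ v, (v ∈ pxz.support ∨ v ∈ pyz.support) ∧ G.dist u v ≤ δ

/-- The slimness `sl(G)`: the smallest `δ` such that `G` is `δ`-slim. -/
noncomputable def slimness {V : Type} (G : SimpleGraph V) : ℕ :=
  sInf {δ : ℕ | IsSlim G δ}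

/-!
Write `f = d(s, ·)` and let `m(u, v)` be the largest `j` such that `u` and `v` are joined by a
walk staying at level `≥ j`. Then `min (m(u, w)) (m(w, v)) ≤ m(u, v)`, and
`f u + f v - d(u, v) ≤ 2 m(u, v) ≤ f u + f v - d(u, v) + Δ`: the lower bound comes from the
lowest vertex of a geodesic from `u` to `v`, the upper one from descending from `u` and `v` to
level `m(u, v)`, where both land in one cluster.

For `u` on the side `xy` with, say, `m(u, y) ≤ m(x, u)`, a discrete intermediate value argument
along `xz` or along `zy` yields a vertex `v` at level `max (m(x, u)) (m(x, y))` with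
`m(x, u) ≤ m(u, v)`; the two-sided bounds for the pairs `(x, u)`, `(u, y)`, `(x, y)`, `(u, v)`
then add up to `2 d(u, v) ≤ 3 Δ`.
-/

namespace SimpleGraph

variable {V : Type} {G : SimpleGraph V} {s u v w : V} {j : ℕ}

theorem Walk.dist_add_dist_le_length (p : G.Walk u v) (hw : w ∈ p.support) :
    G.dist u w + G.dist w v ≤ p.length := by
  classical
  calc G.dist u w + G.dist w v ≤ (p.takeUntil w hw).length + (p.dropUntil w hw).length :=
        add_le_add (dist_le _) (dist_le _)
    _ = p.length := by rw [← Walk.length_append, p.take_spec hw]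

theorem Walk.dist_add_dist_eq_of_length_eq_dist (p : G.Walk u v) (hp : p.length = G.dist u v)
    (hw : w ∈ p.support) : G.dist u w + G.dist w v = G.dist u v := by
  classical
  exact le_antisymm (hp ▸ p.dist_add_dist_le_length hw)
    ((p.takeUntil w hw).reachable.dist_triangle_left v)

theorem Connected.exists_adj_dist_add_one_eq (hG : G.Connected) (h : 0 < G.dist s u) :
    ∃ u', G.Adj u' u ∧ G.dist s u' + 1 = G.dist s u := by
  obtain ⟨p, hp⟩ := hG.exists_walk_length_eq_dist u s
  cases p with
  | nil => simp at h
  | @cons _ u' _ hadj q =>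
    have hq : G.dist s u' ≤ q.length := dist_comm (G := G) ▸ dist_le q
    rw [Walk.length_cons, dist_comm] at hp
    refine ⟨u', hadj.symm, ?_⟩
    rcases hadj.diff_dist_adj (u := s) with h' | h' | h' <;> omega

def LevelConnected (G : SimpleGraph V) (s : V) (j : ℕ) (u v : V) : Prop :=
  ∃ p : G.Walk u v, ∀ w ∈ p.support, j ≤ G.dist s w

namespace LevelConnected

theorem le_dist_left (h : G.LevelConnected s j u v) : j ≤ G.dist s u :=
  let ⟨p, hp⟩ := h; hp u p.start_mem_support

theorem le_dist_right (h : G.LevelConnected s j u v) : j ≤ G.dist s v :=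
  let ⟨p, hp⟩ := h; hp v p.end_mem_support

theorem refl (h : j ≤ G.dist s u) : G.LevelConnected s j u u :=
  ⟨.nil, by simpa using h⟩

theorem of_adj (hadj : G.Adj u v) (hu : j ≤ G.dist s u) (hv : j ≤ G.dist s v) :
    G.LevelConnected s j u v :=
  ⟨hadj.toWalk, by simp [hu, hv]⟩

theorem symm (h : G.LevelConnected s j u v) : G.LevelConnected s j v u :=
  let ⟨p, hp⟩ := h; ⟨p.reverse, fun w hw => hp w (by simpa using hw)⟩

theorem trans (h₁ : G.LevelConnected s j u v) (h₂ : G.LevelConnected s j v w) :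
    G.LevelConnected s j u w := by
  obtain ⟨p, hp⟩ := h₁
  obtain ⟨q, hq⟩ := h₂
  refine ⟨p.append q, fun x hx => ?_⟩
  rcases Walk.mem_support_append_iff p q |>.mp hx with hx | hx
  exacts [hp x hx, hq x hx]

theorem mono {i : ℕ} (hij : i ≤ j) (h : G.LevelConnected s j u v) : G.LevelConnected s i u v :=
  let ⟨p, hp⟩ := h; ⟨p, fun w hw => hij.trans (hp w hw)⟩

end LevelConnected

theorem Connected.levelConnected_zero (hG : G.Connected) (u v : V) :
    G.LevelConnected s 0 u v :=
  ⟨(hG.preconnected u v).some, fun _ _ => Nat.zero_le _⟩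

noncomputable def meetLevel (G : SimpleGraph V) (s u v : V) : ℕ :=
  sSup {j | G.LevelConnected s j u v}

theorem bddAbove_levelConnected (u v : V) : BddAbove {j | G.LevelConnected s j u v} :=
  ⟨G.dist s u, fun _ hj => LevelConnected.le_dist_left hj⟩

theorem LevelConnected.le_meetLevel (h : G.LevelConnected s j u v) : j ≤ G.meetLevel s u v :=
  le_csSup (bddAbove_levelConnected u v) h

theorem Connected.levelConnected_meetLevel (hG : G.Connected) (u v : V) :
    G.LevelConnected s (G.meetLevel s u v) u v :=
  Nat.sSup_mem ⟨0, hG.levelConnected_zero u v⟩ (bddAbove_levelConnected u v)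

theorem Connected.meetLevel_le_dist_left (hG : G.Connected) (u v : V) :
    G.meetLevel s u v ≤ G.dist s u :=
  (hG.levelConnected_meetLevel u v).le_dist_left

theorem Connected.meetLevel_le_dist_right (hG : G.Connected) (u v : V) :
    G.meetLevel s u v ≤ G.dist s v :=
  (hG.levelConnected_meetLevel u v).le_dist_right

theorem Connected.meetLevel_comm (hG : G.Connected) (u v : V) :
    G.meetLevel s u v = G.meetLevel s v u :=
  le_antisymm (hG.levelConnected_meetLevel u v).symm.le_meetLevel
    (hG.levelConnected_meetLevel v u).symm.le_meetLevel

theorem Connected.min_meetLevel_le (hG : G.Connected) (u w v : V) :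
    min (G.meetLevel s u w) (G.meetLevel s w v) ≤ G.meetLevel s u v :=
  ((hG.levelConnected_meetLevel u w).mono (min_le_left _ _)).trans
    ((hG.levelConnected_meetLevel w v).mono (min_le_right _ _)) |>.le_meetLevel

theorem Connected.dist_add_dist_le_two_mul_meetLevel_add_dist (hG : G.Connected) (u v : V) :
    G.dist s u + G.dist s v ≤ 2 * G.meetLevel s u v + G.dist u v := by
  classical
  obtain ⟨p, hp⟩ := hG.exists_walk_length_eq_dist u v
  obtain ⟨w, hw, hmin⟩ := p.support.toFinset.exists_min_image (G.dist s)
    ⟨u, List.mem_toFinset.mpr p.start_mem_support⟩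
  rw [List.mem_toFinset] at hw
  have hlevel : G.dist s w ≤ G.meetLevel s u v :=
    LevelConnected.le_meetLevel ⟨p, fun x hx => hmin x (List.mem_toFinset.mpr hx)⟩
  have hu : G.dist s u ≤ G.dist s w + G.dist w u := hG.dist_triangle
  have hv : G.dist s v ≤ G.dist s w + G.dist w v := hG.dist_triangle
  have hp' := p.dist_add_dist_le_length hw
  rw [dist_comm (u := w) (v := u)] at hu
  omega

theorem Connected.exists_levelConnected_dist_eq (hG : G.Connected) {m : ℕ}
    (hm : m ≤ G.dist s u) :
    ∃ w, G.dist s w = m ∧ G.dist w u + m ≤ G.dist s u ∧ G.LevelConnected s m w u := by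
  obtain ⟨k, hk⟩ := Nat.exists_eq_add_of_le hm
  induction k generalizing u with
  | zero => exact ⟨u, by omega, by simp [hk], .refl hm⟩
  | succ k ih =>
    obtain ⟨u', hadj, hu'⟩ := hG.exists_adj_dist_add_one_eq (s := s) (u := u) (by omega)
    obtain ⟨w, hw, hwu', hlc⟩ := ih (u := u') (by omega) (by omega)
    have : G.dist w u ≤ G.dist w u' + 1 :=
      dist_eq_one_iff_adj.mpr hadj ▸ hG.dist_triangle
    exact ⟨w, hw, by omega, hlc.trans (.of_adj hadj (by omega) (by omega))⟩

theorem SameCluster.dist_le_clusterDiam [Fintype V] (h : SameCluster G s u v) :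
    G.dist u v ≤ clusterDiam G s := by
  classical
  have hle := Finset.le_sup (f := fun p : V × V =>
    if SameCluster G s p.1 p.2 then G.dist p.1 p.2 else 0) (Finset.mem_univ (u, v))
  simp only [if_pos h] at hle
  exact hle

theorem Connected.dist_add_two_mul_meetLevel_le [Fintype V] (hG : G.Connected) (u v : V) :
    G.dist u v + 2 * G.meetLevel s u v ≤ G.dist s u + G.dist s v + clusterDiam G s := by
  obtain ⟨w, hw, hwu, hlcu⟩ := hG.exists_levelConnected_dist_eq (hG.meetLevel_le_dist_left u v)
  obtain ⟨w', hw', hw'v, hlcv⟩ :=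
    hG.exists_levelConnected_dist_eq (hG.meetLevel_le_dist_right u v)
  have hcluster : SameCluster G s w w' :=
    ⟨hw.trans hw'.symm, hw ▸ (hlcu.trans (hG.levelConnected_meetLevel u v)).trans hlcv.symm⟩
  have h₁ : G.dist u v ≤ G.dist u w + G.dist w v := hG.dist_triangle
  have h₂ : G.dist w v ≤ G.dist w w' + G.dist w' v := hG.dist_triangle
  have := hcluster.dist_le_clusterDiam
  rw [dist_comm (u := u) (v := w)] at h₁
  omega

theorem Walk.exists_mem_support_dist_eq_levelConnected (W : G.Walk u v) {ℓ : ℕ}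
    (hne : ¬G.LevelConnected s (ℓ + 1) u v) (hℓ : ℓ ≤ G.dist s u) :
    ∃ w ∈ W.support, G.dist s w = ℓ ∧ G.LevelConnected s ℓ u w := by
  induction W with
  | nil => exact ⟨_, by simp, by grind [LevelConnected.refl], .refl hℓ⟩
  | @cons a b c hadj W ih =>
    by_cases ha : G.dist s a = ℓ
    · exact ⟨a, by simp, ha, .refl hℓ⟩
    have hb : ℓ ≤ G.dist s b := by
      rcases hadj.diff_dist_adj (u := s) with h | h | h <;> omega
    have hne' : ¬G.LevelConnected s (ℓ + 1) b c := fun h =>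
      hne ((LevelConnected.of_adj hadj (by omega) h.le_dist_left).trans h)
    obtain ⟨w, hw, hwℓ, hlc⟩ := ih hne' hb
    exact ⟨w, by simp [hw], hwℓ, (LevelConnected.of_adj hadj hℓ hb).trans hlc⟩

theorem Walk.exists_mem_support_dist_eq_le_meetLevel (W : G.Walk u v)
    {ℓ : ℕ} (hm : G.meetLevel s u v ≤ ℓ) (hℓ : ℓ ≤ G.dist s u) :
    ∃ w ∈ W.support, G.dist s w = ℓ ∧ ℓ ≤ G.meetLevel s u w := by
  obtain ⟨w, hw, hwℓ, hlc⟩ :=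
    W.exists_mem_support_dist_eq_levelConnected (fun h => by have := h.le_meetLevel; omega) hℓ
  exact ⟨w, hw, hwℓ, hlc.le_meetLevel⟩

theorem Connected.exists_mem_sides_dist_eq_le_meetLevel (hG : G.Connected) {x y z : V}
    (pxz : G.Walk x z) (pyz : G.Walk y z) {ℓ : ℕ} (hm : G.meetLevel s x y ≤ ℓ)
    (hℓ : ℓ ≤ G.dist s x) :
    ∃ v, (v ∈ pxz.support ∨ v ∈ pyz.support) ∧ G.dist s v = ℓ ∧ ℓ ≤ G.meetLevel s x v := by
  rcases le_or_gt (G.meetLevel s x z) ℓ with hxz | hxz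
  · obtain ⟨v, hv, hvℓ, hxv⟩ := pxz.exists_mem_support_dist_eq_le_meetLevel hxz hℓ
    exact ⟨v, .inl hv, hvℓ, hxv⟩
  · have hzy : G.meetLevel s z y ≤ ℓ := by
      have := hG.min_meetLevel_le (s := s) x z y
      omega
    have hz : ℓ ≤ G.dist s z := hxz.le.trans (hG.meetLevel_le_dist_right x z)
    obtain ⟨v, hv, hvℓ, hzv⟩ := pyz.reverse.exists_mem_support_dist_eq_le_meetLevel hzy hz
    have := hG.min_meetLevel_le (s := s) x z v
    exact ⟨v, .inr (by simpa using hv), hvℓ, by omega⟩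

theorem Connected.exists_mem_sides_two_mul_dist_le [Fintype V] (hG : G.Connected) {x y z : V}
    (hu : G.dist x u + G.dist u y = G.dist x y) (hle : G.meetLevel s u y ≤ G.meetLevel s x u)
    (pxz : G.Walk x z) (pyz : G.Walk y z) :
    ∃ v, (v ∈ pxz.support ∨ v ∈ pyz.support) ∧ 2 * G.dist u v ≤ 3 * clusterDiam G s := by
  obtain ⟨v, hv, hvℓ, hxv⟩ := hG.exists_mem_sides_dist_eq_le_meetLevel (s := s) pxz pyz
    (le_max_right (G.meetLevel s x u) _)
    (max_le (hG.meetLevel_le_dist_left x u) (hG.meetLevel_le_dist_left x y))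
  have huv : G.meetLevel s x u ≤ G.meetLevel s u v := by
    have := hG.min_meetLevel_le (s := s) u x v
    rw [hG.meetLevel_comm u x] at this
    omega
  have hkey : 2 * G.dist s u + 2 * max (G.meetLevel s x u) (G.meetLevel s x y) ≤
      4 * G.meetLevel s x u + clusterDiam G s := by
    have := hG.dist_add_dist_le_two_mul_meetLevel_add_dist (s := s) x u
    have := hG.dist_add_dist_le_two_mul_meetLevel_add_dist (s := s) u y
    have := hG.dist_add_two_mul_meetLevel_le (s := s) x y
    have := hG.min_meetLevel_le (s := s) x u y
    omega
  have := hG.dist_add_two_mul_meetLevel_le (s := s) u v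
  exact ⟨v, hv, by omega⟩

theorem Connected.isSlim_three_mul_clusterDiam_div_two [Fintype V] (hG : G.Connected) (s : V) :
    IsSlim G (3 * clusterDiam G s / 2) := by
  intro x y z pxy pxz pyz hxy _ _ u hu
  have hsplit := pxy.dist_add_dist_eq_of_length_eq_dist hxy hu
  suffices ∃ v, (v ∈ pxz.support ∨ v ∈ pyz.support) ∧ 2 * G.dist u v ≤ 3 * clusterDiam G s by
    obtain ⟨v, hv, h⟩ := this
    exact ⟨v, hv, by omega⟩
  rcases le_total (G.meetLevel s u y) (G.meetLevel s x u) with h | h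
  · exact hG.exists_mem_sides_two_mul_dist_le hsplit h pxz pyz
  · have hsplit' : G.dist y u + G.dist u x = G.dist y x := by
      rw [dist_comm (u := y) (v := u), dist_comm (u := u) (v := x), dist_comm (u := y) (v := x)]
      omega
    obtain ⟨v, hv, h⟩ := hG.exists_mem_sides_two_mul_dist_le hsplit'
      (by rwa [hG.meetLevel_comm u x, hG.meetLevel_comm y u]) pyz pxz
    exact ⟨v, hv.symm, h⟩

end SimpleGraph

/-- For every finite connected graph `G` and every vertex `s`,
`sl(G) ≤ ⌊(3/2) ⬝ Δ_s(G)⌋`. -/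
theorem slimness_le_three_mul_clusterDiam_div_two {V : Type} [Fintype V]
    (G : SimpleGraph V) (hG : G.Connected) (s : V) :
    slimness G ≤ 3 * clusterDiam G s / 2 :=
  Nat.sInf_le (hG.isSlim_three_mul_clusterDiam_div_two s)
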